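/- Let A_1, ..., A_m be non-negative matrices that define bounded operators on ℓ^p, let t ∈ [1, m], and for i = 1, ..., m set P_i = A_i^{(t)} A_{i+1}^{(t)} ⋯ A_m^{(t)} A_1^{(t)} A_2^{(t)} ⋯ A_{i-1}^{(t)} (the cyclic product of the Hadamard t-th powers starting at index i). Then ‖(A_1 ∘ ⋯ ∘ A_m)^m‖ ≤ ‖P_1^{(1/t)} ∘ ⋯ ∘ P_m^{(1/t)}‖ ≤ (‖P_1‖ ⋯ ‖P_m‖)^{1/t} ≤ (‖(A_1 A_2 ⋯ A_m)^{(t)}‖ · ‖(A_2 ⋯ A_m A_1)^{(t)}‖ ⋯ ‖(A_m A_1 ⋯ A_{m-1})^{(t)}‖)^{1/t} ≤ ‖A_1 A_2 ⋯ A_m‖ · ‖A_2 ⋯ A_m A_1‖ ⋯ ‖A_m A_1 ⋯ A_{m-1}‖. -/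

import Mathlib

open scoped ENNReal NNReal BigOperators InnerProductSpace

noncomputable section

/-- The sequence space `ℓ^p(ℕ)` (real scalars). -/
abbrev lpSeq (p : ℝ≥0∞) := lp (fun _ : ℕ => ℝ) p

/-- The (infinite) non-negative matrix `a` defines the bounded operator `T` on `ℓ^p`:
for every `x ∈ ℓ^p` and every row index `i`, the series `∑_j a i j * x j` converges,
with sum equal to `(T x) i`. -/
def Represents (p : ℝ≥0∞) [Fact (1 ≤ p)] (a : ℕ → ℕ → ℝ)
    (T : lpSeq p →L[ℝ] lpSeq p) : Prop :=
  ∀ x : lpSeq p, ∀ i : ℕ, HasSum (fun j => a i j * x j) (T x i)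

/-- Hadamard (entrywise) product of two matrices. -/
def hadamard (a b : ℕ → ℕ → ℝ) : ℕ → ℕ → ℝ := fun i j => a i j * b i j

/-- Hadamard (entrywise) power `a^{(t)}`. -/
def hadPow (a : ℕ → ℕ → ℝ) (t : ℝ) : ℕ → ℕ → ℝ := fun i j => a i j ^ t

/-- Hadamard product of a finite family of matrices. -/
def hadProd {m : ℕ} (A : Fin m → ℕ → ℕ → ℝ) : ℕ → ℕ → ℝ := fun i j => ∏ k, A k i j

/-- Matrix product of two infinite matrices. -/
def matMul (a b : ℕ → ℕ → ℝ) : ℕ → ℕ → ℝ := fun i j => ∑' k, a i k * b k j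

/-- The identity matrix. -/
def idMat : ℕ → ℕ → ℝ := fun i j => if i = j then 1 else 0

/-- Product of a list of matrices. -/
def matListProd : List (ℕ → ℕ → ℝ) → ℕ → ℕ → ℝ
  | [] => idMat
  | a :: l => matMul a (matListProd l)

/-- Transposed matrix. -/
def transp (a : ℕ → ℕ → ℝ) : ℕ → ℕ → ℝ := fun i j => a j i

/-- The cyclic matrix product `A_i A_{i+1} ⋯ A_m A_1 ⋯ A_{i-1}` starting at index `i`. -/
def cycMatProd {m : ℕ} (A : Fin m → ℕ → ℕ → ℝ) (i : Fin m) : ℕ → ℕ → ℝ :=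
  matListProd (List.ofFn fun k : Fin m => A (i + k))

/-- The cyclic operator product `T_i T_{i+1} ⋯ T_m T_1 ⋯ T_{i-1}` starting at index `i`
(operator multiplication is composition). -/
def cycOpProd {m : ℕ} {p : ℝ≥0∞} [Fact (1 ≤ p)]
    (T : Fin m → lpSeq p →L[ℝ] lpSeq p) (i : Fin m) : lpSeq p →L[ℝ] lpSeq p :=
  (List.ofFn fun k : Fin m => T (i + k)).prod

/-- The numerical radius of a bounded operator on `ℓ²`:
`w(T) = sup { |⟨T f, f⟩| : ‖f‖ = 1 }`. -/
def numRadius (T : lpSeq 2 →L[ℝ] lpSeq 2) : ℝ :=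
  sSup { r : ℝ | ∃ f : lpSeq 2, ‖f‖ = 1 ∧ r = |⟪T f, f⟫_ℝ| }


/-!
For non-negative matrices the operator norm on `ℓ^p` is monotone in the entries, so every
inequality of the chain is reduced to an entrywise comparison or to a bound on a single norm.

* Entries are bounded by the norm, so `a^{(s)} ≤ ‖A‖^{s-1} a` for `s ≥ 1` and hence
  `‖A^{(s)}‖ ≤ ‖A‖^s`; this is the last inequality.
* Hölder's inequality with exponents `c` satisfying `m c ≥ 1`,
  `∑ₖ ∏ₛ fₛ(k)^c ≤ ∏ₛ (∑ₖ fₛ(k))^c`, applied once per matrix product, gives by induction on `r`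
  that `(A₁∘⋯∘A_m)^r` is entrywise at most `∘ₛ (A_s^{(t)} A_{s+1}^{(t)} ⋯ A_{s+r-1}^{(t)})^{(1/t)}`
  (indices mod `m`); at `r = m` this is the first inequality.
* Applied once to the rows and once to the `p`-th powers of the vectors `B_s x`, the same
  inequality bounds the geometric mean: `‖∘ₛ B_s^{(1/m)}‖ ≤ ∏ₛ ‖B_s‖^{1/m}`. Combined with the
  first bullet this gives `‖∘ₛ B_s^{(c)}‖ ≤ ∏ₛ ‖B_s‖^c` whenever `m c ≥ 1`, which is the second
  inequality for `c = 1/t`.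
* The case `m = 1` of Hölder, `∑ₖ aₖ^t bₖ^t ≤ (∑ₖ aₖ bₖ)^t`, shows entrywise
  `A_i^{(t)} ⋯ A_{i-1}^{(t)} ≤ (A_i ⋯ A_{i-1})^{(t)}`, the third inequality.
-/

section Hoelder

variable {α ι : Type*}

theorem ENNReal.tsum_rpow_le_rpow_tsum (f : α → ℝ≥0∞) {q : ℝ} (hq : 1 ≤ q) :
    ∑' k, f k ^ q ≤ (∑' k, f k) ^ q := by
  have split (u : ℝ≥0∞) : u ^ q = u * u ^ (q - 1) := by
    conv_lhs => rw [← add_sub_cancel 1 q]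
    rw [ENNReal.rpow_add_of_nonneg _ _ zero_le_one (by linarith), ENNReal.rpow_one]
  calc ∑' k, f k ^ q = ∑' k, f k * f k ^ (q - 1) := by simp_rw [split]
    _ ≤ ∑' k, f k * (∑' l, f l) ^ (q - 1) := by
      gcongr with k
      exact ENNReal.le_tsum k
    _ = (∑' k, f k) ^ q := by rw [ENNReal.tsum_mul_right, split]

theorem ENNReal.tsum_prod_rpow_le_prod_rpow_tsum [Fintype ι] (f : ι → α → ℝ≥0∞) {c : ℝ}
    (hc : 1 ≤ Fintype.card ι * c) :
    ∑' k, ∏ s, f s k ^ c ≤ ∏ s, (∑' k, f s k) ^ c := by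
  let _ : MeasurableSpace α := ⊤
  set n : ℝ := (Fintype.card ι : ℝ)
  have hn : n ≠ 0 := by
    rintro h; rw [h, zero_mul] at hc; linarith
  have hnc : n * c * (1 / n) = c := by field_simp
  have hoelder := ENNReal.lintegral_prod_norm_pow_le (μ := MeasureTheory.Measure.count)
    Finset.univ (f := fun s k => f s k ^ (n * c)) (fun s _ => measurable_from_top.aemeasurable)
    (p := fun _ => 1 / n)
    (by rw [Finset.sum_const, Finset.card_univ, nsmul_eq_mul]; exact mul_one_div_cancel hn)
    (fun s _ => by positivity)
  simp only [MeasureTheory.lintegral_count, ← ENNReal.rpow_mul, hnc] at hoelder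
  calc ∑' k, ∏ s, f s k ^ c ≤ ∏ s, (∑' k, f s k ^ (n * c)) ^ (1 / n) := hoelder
    _ ≤ ∏ s, ((∑' k, f s k) ^ (n * c)) ^ (1 / n) := by
      gcongr
      exact ENNReal.tsum_rpow_le_rpow_tsum _ hc
    _ = ∏ s, (∑' k, f s k) ^ c := by simp only [← ENNReal.rpow_mul, hnc]

theorem summable_and_tsum_le_of_tsum_ofReal_le {F : α → ℝ} (hF : 0 ≤ F) {C : ℝ} (hC : 0 ≤ C)
    (h : ∑' k, ENNReal.ofReal (F k) ≤ ENNReal.ofReal C) : Summable F ∧ ∑' k, F k ≤ C := by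
  have hsum : Summable F := by
    simpa [ENNReal.toReal_ofReal (hF _)] using
      ENNReal.summable_toReal (h.trans_lt ENNReal.ofReal_lt_top).ne
  refine ⟨hsum, ?_⟩
  rwa [← ENNReal.ofReal_tsum_of_nonneg hF hsum, ENNReal.ofReal_le_ofReal_iff hC] at h

theorem summable_and_tsum_prod_rpow_le_prod_rpow_tsum [Fintype ι] {f : ι → α → ℝ} (hf : 0 ≤ f)
    (hsum : ∀ s, Summable (f s)) {c : ℝ} (hc : 1 ≤ Fintype.card ι * c) :
    Summable (fun k => ∏ s, f s k ^ c) ∧ ∑' k, ∏ s, f s k ^ c ≤ ∏ s, (∑' k, f s k) ^ c := by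
  have hc0 : 0 ≤ c := by
    by_contra! h; nlinarith [(Fintype.card ι).cast_nonneg (α := ℝ)]
  refine summable_and_tsum_le_of_tsum_ofReal_le
    (fun k => Finset.prod_nonneg fun s _ => Real.rpow_nonneg (hf s k) c)
    (Finset.prod_nonneg fun s _ => Real.rpow_nonneg (tsum_nonneg (hf s)) c) ?_
  have hofReal (g : ι → ℝ) (hg : 0 ≤ g) :
      ENNReal.ofReal (∏ s, g s ^ c) = ∏ s, ENNReal.ofReal (g s) ^ c := by
    rw [ENNReal.ofReal_prod_of_nonneg fun s _ => Real.rpow_nonneg (hg s) c]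
    exact Finset.prod_congr rfl fun s _ => (ENNReal.ofReal_rpow_of_nonneg (hg s) hc0).symm
  simp_rw [hofReal _ (fun s => hf s _), hofReal _ (fun s => tsum_nonneg (hf s)),
    ENNReal.ofReal_tsum_of_nonneg (hf _) (hsum _)]
  exact ENNReal.tsum_prod_rpow_le_prod_rpow_tsum _ hc

end Hoelder

def lpAbs {p : ℝ≥0∞} (x : lpSeq p) : lpSeq p :=
  ⟨fun i => |x i|, (lp.memℓp x).mono' fun i => by simp⟩

@[simp] theorem lpAbs_apply {p : ℝ≥0∞} (x : lpSeq p) (i : ℕ) : lpAbs x i = |x i| := rfl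

section Represents

variable {p : ℝ≥0∞} [Fact (1 ≤ p)] {a b c : ℕ → ℕ → ℝ} {S T : lpSeq p →L[ℝ] lpSeq p}

theorem norm_lpAbs (x : lpSeq p) : ‖lpAbs x‖ = ‖x‖ := by
  have hp : p ≠ 0 := (zero_lt_one.trans_le Fact.out).ne'
  exact le_antisymm (lp.norm_mono hp fun i => by simp) (lp.norm_mono hp fun i => by simp)

theorem Represents.unique (hS : Represents p a S) (hT : Represents p a T) : S = T :=
  ContinuousLinearMap.ext fun x => lp.ext <| funext fun i => (hS x i).unique (hT x i)

theorem Represents.apply_single (hT : Represents p a T) (i j : ℕ) :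
    T (lp.single p j 1) i = a i j := by
  refine (hT _ i).unique ?_
  convert hasSum_ite_eq j (a i j) using 2 with k
  by_cases hk : k = j <;> simp [hk]

theorem Represents.entry_le_opNorm (hT : Represents p a T) (i j : ℕ) : a i j ≤ ‖T‖ := by
  have hp : p ≠ 0 := (zero_lt_one.trans_le Fact.out).ne'
  calc a i j = T (lp.single p j 1) i := (hT.apply_single i j).symm
    _ ≤ ‖T (lp.single p j 1)‖ := (Real.le_norm_self _).trans (lp.norm_apply_le_norm hp _ i)
    _ ≤ ‖T‖ * ‖lp.single (E := fun _ : ℕ => ℝ) p j 1‖ := T.le_opNorm _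
    _ = ‖T‖ := by rw [lp.norm_single (pos_iff_ne_zero.2 hp), norm_one, mul_one]

theorem Represents.summable_mul (hS : Represents p a S) (hT : Represents p b T) (i j : ℕ) :
    Summable fun k => a i k * b k j := by
  simpa only [hT.apply_single] using (hS (T (lp.single p j 1)) i).summable

theorem Represents.apply_nonneg (hT : Represents p a T) (ha : 0 ≤ a) {x : lpSeq p}
    (hx : ∀ j, 0 ≤ x j) (i : ℕ) : 0 ≤ T x i :=
  (hT x i).nonneg fun j => mul_nonneg (ha i j) (hx j)

theorem Represents.smul (hT : Represents p a T) (d : ℝ) : Represents p (d • a) (d • T) :=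
  fun x i => by
    simpa only [Pi.smul_apply, smul_eq_mul, mul_assoc, smul_apply, lp.coeFn_smul]
      using (hT x i).mul_left d

theorem exists_represents_of_bound (hc : 0 ≤ c) {K : ℝ} (hK : 0 ≤ K)
    (hbd : ∀ x : lpSeq p, (∀ j, 0 ≤ x j) → ∃ z : lpSeq p, ‖z‖ ≤ K * ‖x‖ ∧
      ∀ i, Summable (fun j => c i j * x j) ∧ ∑' j, c i j * x j ≤ z i) :
    ∃ W : lpSeq p →L[ℝ] lpSeq p, Represents p c W ∧ ‖W‖ ≤ K := by
  choose z hzK hz using fun x : lpSeq p => hbd (lpAbs x) fun j => abs_nonneg (x j)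
  have habs (x : lpSeq p) (i j : ℕ) : |c i j * x j| = c i j * lpAbs x j := by
    rw [abs_mul, abs_of_nonneg (hc i j)]; rfl
  have hsum (x : lpSeq p) (i : ℕ) : Summable fun j => c i j * x j :=
    .of_abs <| by simpa only [habs] using (hz x i).1
  have hle (x : lpSeq p) (i : ℕ) : ‖∑' j, c i j * x j‖ ≤ ‖z x i‖ :=
    calc ‖∑' j, c i j * x j‖ ≤ ∑' j, ‖c i j * x j‖ := norm_tsum_le_tsum_norm (by
          simpa only [Real.norm_eq_abs, habs] using (hz x i).1)
      _ = ∑' j, c i j * lpAbs x j := by simp only [Real.norm_eq_abs, habs]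
      _ ≤ ‖z x i‖ := (hz x i).2.trans (Real.le_norm_self _)
  let L : lpSeq p →ₗ[ℝ] lpSeq p :=
    { toFun := fun x => ⟨fun i => ∑' j, c i j * x j, (lp.memℓp (z x)).mono' (hle x)⟩
      map_add' := fun x y => lp.ext <| funext fun i => by
        simp only [lp.coeFn_add, Pi.add_apply, mul_add]
        exact (hsum x i).tsum_add (hsum y i)
      map_smul' := fun r x => lp.ext <| funext fun i => by
        simp only [lp.coeFn_smul, Pi.smul_apply, smul_eq_mul, RingHom.id_apply, mul_left_comm]
        exact tsum_mul_left }
  have hL (x : lpSeq p) : ‖L x‖ ≤ K * ‖x‖ := by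
    calc ‖L x‖ ≤ ‖z x‖ := lp.norm_mono (zero_lt_one.trans_le Fact.out).ne' (hle x)
      _ ≤ K * ‖x‖ := by simpa only [norm_lpAbs] using hzK x
  exact ⟨L.mkContinuous K hL, fun x i => (hsum x i).hasSum, L.mkContinuous_norm_le hK hL⟩

theorem Represents.exists_of_le (hT : Represents p a T) (hc : 0 ≤ c) (hca : c ≤ a) :
    ∃ W : lpSeq p →L[ℝ] lpSeq p, Represents p c W ∧ ‖W‖ ≤ ‖T‖ := by
  refine exists_represents_of_bound hc (norm_nonneg T) fun x hx => ⟨T x, T.le_opNorm x, fun i => ?_⟩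
  have hle (j : ℕ) : c i j * x j ≤ a i j * x j := mul_le_mul_of_nonneg_right (hca i j) (hx j)
  have hsum : Summable fun j => c i j * x j :=
    (hT x i).summable.of_nonneg_of_le (fun j => mul_nonneg (hc i j) (hx j)) hle
  exact ⟨hsum, (hsum.tsum_le_tsum hle (hT x i).summable).trans_eq (hT x i).tsum_eq⟩

theorem Represents.opNorm_le_of_le (hS : Represents p a S) (hT : Represents p b T) (ha : 0 ≤ a)
    (hab : a ≤ b) : ‖S‖ ≤ ‖T‖ := by
  obtain ⟨W, hW, hWT⟩ := hT.exists_of_le ha hab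
  rwa [hS.unique hW]

theorem Represents.exists_hadPow (hT : Represents p a T) (ha : 0 ≤ a) {s : ℝ} (hs : 1 ≤ s) :
    ∃ W : lpSeq p →L[ℝ] lpSeq p, Represents p (hadPow a s) W ∧ ‖W‖ ≤ ‖T‖ ^ s := by
  have hsplit {u : ℝ} (hu : 0 ≤ u) : u ^ s = u ^ (s - 1) * u := by
    rw [← Real.rpow_add_one' hu (by linarith), sub_add_cancel]
  have hle : hadPow a s ≤ ‖T‖ ^ (s - 1) • a := fun i j => by
    rw [hadPow, hsplit (ha i j)]
    exact mul_le_mul_of_nonneg_right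
      (Real.rpow_le_rpow (ha i j) (hT.entry_le_opNorm i j) (by linarith)) (ha i j)
  obtain ⟨W, hW, hWT⟩ := (hT.smul _).exists_of_le (fun i j => Real.rpow_nonneg (ha i j) s) hle
  refine ⟨W, hW, hWT.trans_eq ?_⟩
  rw [norm_smul, Real.norm_of_nonneg (by positivity), ← hsplit (norm_nonneg T)]

end Represents

section Products

variable {p : ℝ≥0∞} [Fact (1 ≤ p)] {a b : ℕ → ℕ → ℝ} {S T : lpSeq p →L[ℝ] lpSeq p}

theorem matMul_nonneg (ha : 0 ≤ a) (hb : 0 ≤ b) : 0 ≤ matMul a b := fun i j =>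
  tsum_nonneg fun k => mul_nonneg (ha i k) (hb k j)

theorem matListProd_nonneg {L : List (ℕ → ℕ → ℝ)} (hL : ∀ a ∈ L, 0 ≤ a) : 0 ≤ matListProd L := by
  induction L with
  | nil => intro i j; unfold matListProd idMat; split_ifs <;> norm_num
  | cons a L ih =>
    exact matMul_nonneg (hL a List.mem_cons_self) (ih fun b hb => hL b (List.mem_cons_of_mem a hb))

theorem matListProd_replicate_nonneg (ha : 0 ≤ a) (r : ℕ) :
    0 ≤ matListProd (List.replicate r a) :=
  matListProd_nonneg fun _ hb => List.eq_of_mem_replicate hb ▸ ha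

theorem matListProd_ofFn_nonneg {n : ℕ} {M : Fin n → ℕ → ℕ → ℝ} (hM : 0 ≤ M) :
    0 ≤ matListProd (List.ofFn M) :=
  matListProd_nonneg fun a ha => by
    obtain ⟨k, rfl⟩ := List.mem_ofFn.1 ha
    exact hM k

theorem cycMatProd_nonneg {m : ℕ} {A : Fin m → ℕ → ℕ → ℝ} (hA : 0 ≤ A) (i : Fin m) :
    0 ≤ cycMatProd A i :=
  matListProd_ofFn_nonneg fun k => hA (i + k)

theorem hadPow_one (a : ℕ → ℕ → ℝ) : hadPow a 1 = a :=
  funext₂ fun i j => Real.rpow_one (a i j)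

theorem hadPow_nonneg (ha : 0 ≤ a) (t : ℝ) : 0 ≤ hadPow a t := fun i j =>
  Real.rpow_nonneg (ha i j) t

theorem hadProd_nonneg {m : ℕ} {A : Fin m → ℕ → ℕ → ℝ} (hA : 0 ≤ A) : 0 ≤ hadProd A :=
  fun i j => Finset.prod_nonneg fun k _ => hA k i j

theorem represents_idMat : Represents p idMat 1 := fun x i => by
  show HasSum _ (x i)
  convert hasSum_ite_eq i (x i) using 2 with j
  rcases eq_or_ne j i with rfl | h
  · simp [idMat]
  · simp [idMat, h, h.symm]

theorem Represents.mul (hS : Represents p a S) (hT : Represents p b T) (ha : 0 ≤ a)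
    (hb : 0 ≤ b) : Represents p (matMul a b) (S * T) := by
  intro x i
  set g : ℕ × ℕ → ℝ := fun kj => a i kj.1 * (b kj.1 kj.2 * x kj.2)
  have hg : Summable g := by
    refine .of_norm ((summable_prod_of_nonneg fun _ => norm_nonneg _).2 ⟨fun k => ?_, ?_⟩)
    all_goals simp only [g, norm_mul, Real.norm_of_nonneg (ha _ _), Real.norm_of_nonneg (hb _ _),
      Real.norm_eq_abs, ← lpAbs_apply]
    · exact (hT (lpAbs x) k).summable.mul_left _
    · simpa only [tsum_mul_left, (hT (lpAbs x) _).tsum_eq] using (hS (T (lpAbs x)) i).summable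
  have htot : HasSum g (S (T x) i) := by
    convert hg.hasSum using 1
    exact (hS (T x) i).unique (hg.hasSum.prod_fiberwise fun k => (hT x k).mul_left (a i k))
  refine ((Equiv.prodComm ℕ ℕ).hasSum_iff.2 htot).prod_fiberwise fun j => ?_
  simpa only [g, Equiv.prodComm_apply, Prod.swap, Function.comp, ← mul_assoc, matMul]
    using ((hS.summable_mul hT i j).hasSum.mul_right (x j))

theorem represents_matListProd_ofFn {n : ℕ} {M : Fin n → ℕ → ℕ → ℝ}
    {O : Fin n → lpSeq p →L[ℝ] lpSeq p} (hM : 0 ≤ M) (hO : ∀ k, Represents p (M k) (O k)) :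
    Represents p (matListProd (List.ofFn M)) (List.ofFn O).prod := by
  induction n with
  | zero => exact represents_idMat
  | succ n ih =>
    simp only [List.ofFn_succ, List.prod_cons, matListProd]
    exact (hO 0).mul (ih (fun k => hM k.succ) fun k => hO k.succ) (hM 0)
      (matListProd_ofFn_nonneg fun k => hM k.succ)

theorem Represents.matListProd_replicate (hT : Represents p a T) (ha : 0 ≤ a) (r : ℕ) :
    Represents p (matListProd (List.replicate r a)) (T ^ r) := by
  simpa only [List.ofFn_const, List.prod_replicate] using
    represents_matListProd_ofFn (M := fun _ : Fin r => a) (fun _ => ha) fun _ => hT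

theorem represents_cycMatProd {m : ℕ} {A : Fin m → ℕ → ℕ → ℝ}
    {T : Fin m → lpSeq p →L[ℝ] lpSeq p} (hA : 0 ≤ A) (hT : ∀ k, Represents p (A k) (T k))
    (i : Fin m) : Represents p (cycMatProd A i) (cycOpProd T i) :=
  represents_matListProd_ofFn (fun k => hA (i + k)) fun k => hT (i + k)

end Products

section HadamardInequalities

variable {p : ℝ≥0∞} [Fact (1 ≤ p)] {t : ℝ}

theorem matMul_hadPow_le {a b c : ℕ → ℕ → ℝ} (ha : 0 ≤ a) (hb : 0 ≤ b) (hc : 0 ≤ c)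
    (ht : 1 ≤ t) (hcb : c ≤ hadPow b t) (hab : ∀ i j, Summable fun k => a i k * b k j) :
    matMul (hadPow a t) c ≤ hadPow (matMul a b) t := fun i j => by
  obtain ⟨hsum, hle⟩ := summable_and_tsum_prod_rpow_le_prod_rpow_tsum (ι := Unit)
    (f := fun _ k => a i k * b k j) (fun _ k => mul_nonneg (ha i k) (hb k j))
    (fun _ => hab i j) (c := t) (by simpa using ht)
  simp only [Finset.univ_unique, Finset.prod_singleton] at hsum hle
  have hpt (k : ℕ) : a i k ^ t * c k j ≤ (a i k * b k j) ^ t := by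
    rw [Real.mul_rpow (ha i k) (hb k j)]
    exact mul_le_mul_of_nonneg_left (hcb k j) (Real.rpow_nonneg (ha i k) t)
  calc matMul (hadPow a t) c i j = ∑' k, a i k ^ t * c k j := rfl
    _ ≤ ∑' k, (a i k * b k j) ^ t :=
      (hsum.of_nonneg_of_le (fun k => mul_nonneg (Real.rpow_nonneg (ha i k) t) (hc k j)) hpt)
        |>.tsum_le_tsum hpt hsum
    _ ≤ hadPow (matMul a b) t i j := hle

theorem matListProd_ofFn_hadPow_le {n : ℕ} {M : Fin n → ℕ → ℕ → ℝ}
    {O : Fin n → lpSeq p →L[ℝ] lpSeq p} (hM : 0 ≤ M) (hO : ∀ k, Represents p (M k) (O k))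
    (ht : 1 ≤ t) :
    matListProd (List.ofFn fun k => hadPow (M k) t) ≤ hadPow (matListProd (List.ofFn M)) t := by
  induction n with
  | zero =>
    intro i j
    simp only [List.ofFn_zero, matListProd, hadPow, idMat]
    split_ifs <;> simp [Real.zero_rpow (by linarith : t ≠ 0)]
  | succ n ih =>
    simp only [List.ofFn_succ, matListProd]
    exact matMul_hadPow_le (hM 0) (matListProd_ofFn_nonneg fun k => hM k.succ)
      (matListProd_ofFn_nonneg fun k => hadPow_nonneg (hM k.succ) t) ht
      (ih (fun k => hM k.succ) fun k => hO k.succ)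
      ((hO 0).summable_mul (represents_matListProd_ofFn (fun k => hM k.succ) fun k => hO k.succ))

theorem cycMatProd_hadPow_le {m : ℕ} {A : Fin m → ℕ → ℕ → ℝ}
    {T : Fin m → lpSeq p →L[ℝ] lpSeq p} (hA : 0 ≤ A) (hT : ∀ k, Represents p (A k) (T k))
    (ht : 1 ≤ t) (i : Fin m) :
    cycMatProd (fun k => hadPow (A k) t) i ≤ hadPow (cycMatProd A i) t :=
  matListProd_ofFn_hadPow_le (fun k => hA (i + k)) (fun k => hT (i + k)) ht

theorem matMul_hadProd_le {m : ℕ} {A F : Fin m → ℕ → ℕ → ℝ} {R : ℕ → ℕ → ℝ} (hA : 0 ≤ A)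
    (hF : 0 ≤ F) (hR₀ : 0 ≤ R) (ht : 0 < t) (htm : t ≤ m)
    (hR : R ≤ hadProd fun s => hadPow (F s) (1 / t))
    (hsum : ∀ s i j, Summable fun k => A s i k ^ t * F s k j) :
    matMul (hadProd A) R ≤ hadProd fun s => hadPow (matMul (hadPow (A s) t) (F s)) (1 / t) :=
  fun i j => by
  obtain ⟨hs, hle⟩ := summable_and_tsum_prod_rpow_le_prod_rpow_tsum
    (f := fun s k => A s i k ^ t * F s k j)
    (fun s k => mul_nonneg (Real.rpow_nonneg (hA s i k) t) (hF s k j)) (fun s => hsum s i j)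
    (c := 1 / t) (by rw [Fintype.card_fin, mul_one_div]; exact (one_le_div ht).2 htm)
  have hpt (k : ℕ) : hadProd A i k * R k j ≤ ∏ s, (A s i k ^ t * F s k j) ^ (1 / t) :=
    calc hadProd A i k * R k j ≤ hadProd A i k * ∏ s, F s k j ^ (1 / t) :=
          mul_le_mul_of_nonneg_left (hR k j) (hadProd_nonneg hA i k)
      _ = ∏ s, (A s i k ^ t * F s k j) ^ (1 / t) := by
          rw [hadProd, ← Finset.prod_mul_distrib]
          refine Finset.prod_congr rfl fun s _ => ?_
          rw [Real.mul_rpow (Real.rpow_nonneg (hA s i k) t) (hF s k j), one_div,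
            Real.rpow_rpow_inv (hA s i k) ht.ne']
  calc matMul (hadProd A) R i j = ∑' k, hadProd A i k * R k j := rfl
    _ ≤ ∑' k, ∏ s, (A s i k ^ t * F s k j) ^ (1 / t) :=
      (hs.of_nonneg_of_le (fun k => mul_nonneg (hadProd_nonneg hA i k) (hR₀ k j)) hpt)
        |>.tsum_le_tsum hpt hs
    _ ≤ _ := hle

theorem hadProd_comp_equiv {m : ℕ} (B : Fin m → ℕ → ℕ → ℝ) (e : Fin m ≃ Fin m) :
    (hadProd fun s => B (e s)) = hadProd B :=
  funext fun i => funext fun j => e.prod_comp fun s => B s i j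

open Fin.NatCast in
theorem matListProd_ofFn_add_succ {m : ℕ} [NeZero m] (B : Fin m → ℕ → ℕ → ℝ) (s : Fin m)
    (r : ℕ) :
    matListProd (List.ofFn fun l : Fin (r + 1) => B (s + ((l : ℕ) : Fin m))) =
      matMul (B s) (matListProd (List.ofFn fun l : Fin r => B (s + 1 + ((l : ℕ) : Fin m)))) := by
  simp only [List.ofFn_succ, matListProd, Fin.val_zero, Nat.cast_zero, add_zero, Fin.val_succ,
    Nat.cast_add, Nat.cast_one, add_comm, add_left_comm]

open Fin.NatCast in
theorem matListProd_replicate_hadProd_le {m : ℕ} [NeZero m] {A : Fin m → ℕ → ℕ → ℝ}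
    {S : Fin m → lpSeq p →L[ℝ] lpSeq p} (hA : 0 ≤ A)
    (hS : ∀ k, Represents p (hadPow (A k) t) (S k)) (ht : 0 < t) (htm : t ≤ m) (r : ℕ) :
    matListProd (List.replicate r (hadProd A)) ≤ hadProd fun s => hadPow
      (matListProd (List.ofFn fun l : Fin r => hadPow (A (s + ((l : ℕ) : Fin m))) t)) (1 / t) := by
  induction r with
  | zero =>
    intro i j
    simp only [List.replicate_zero, List.ofFn_zero, matListProd, hadProd, hadPow, idMat]
    split_ifs
    · simp
    · exact Finset.prod_nonneg fun _ _ => Real.rpow_nonneg le_rfl _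
  | succ r ih =>
    set F : Fin m → ℕ → ℕ → ℝ := fun s =>
      matListProd (List.ofFn fun l : Fin r => hadPow (A (s + 1 + ((l : ℕ) : Fin m))) t)
    have hF : 0 ≤ F := fun s => matListProd_ofFn_nonneg fun l => hadPow_nonneg (hA _) t
    have hR : matListProd (List.replicate r (hadProd A)) ≤
        hadProd fun s => hadPow (F s) (1 / t) := by
      refine ih.trans_eq ?_
      rw [← hadProd_comp_equiv _ (Equiv.addRight 1)]
      simp only [F, Equiv.coe_addRight, add_right_comm]
    have hsum (s : Fin m) (i j : ℕ) : Summable fun k => A s i k ^ t * F s k j :=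
      (hS s).summable_mul (represents_matListProd_ofFn (fun l => hadPow_nonneg (hA _) t)
        fun l => hS _) i j
    simp only [List.replicate_succ, matListProd,
      matListProd_ofFn_add_succ (fun k => hadPow (A k) t)]
    exact matMul_hadProd_le hA hF (matListProd_replicate_nonneg (hadProd_nonneg hA) r) ht htm hR
      hsum

theorem matListProd_replicate_hadProd_le_cycMatProd {m : ℕ} [NeZero m] {A : Fin m → ℕ → ℕ → ℝ}
    {S : Fin m → lpSeq p →L[ℝ] lpSeq p} (hA : 0 ≤ A)
    (hS : ∀ k, Represents p (hadPow (A k) t) (S k)) (ht : 0 < t) (htm : t ≤ m) :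
    matListProd (List.replicate m (hadProd A)) ≤
      hadProd fun s => hadPow (cycMatProd (fun k => hadPow (A k) t) s) (1 / t) := by
  simpa only [cycMatProd, Fin.cast_val_eq_self]
    using matListProd_replicate_hadProd_le hA hS ht htm m

end HadamardInequalities

section GeometricMean

variable {p : ℝ≥0∞} [Fact (1 ≤ p)]

theorem exists_lpSeq_prod_rpow_norm_le {ι : Type*} [Fintype ι] (hp : p ≠ ∞) {y : ι → lpSeq p}
    (hy : ∀ s i, 0 ≤ y s i) {c : ℝ} (hc : 1 ≤ Fintype.card ι * c) :
    ∃ g : lpSeq p, (∀ i, g i = ∏ s, y s i ^ c) ∧ ‖g‖ ≤ ∏ s, ‖y s‖ ^ c := by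
  have hP : 0 < p.toReal := ENNReal.toReal_pos (zero_lt_one.trans_le Fact.out).ne' hp
  have hswap {u : ℝ} (hu : 0 ≤ u) : (u ^ c) ^ p.toReal = (u ^ p.toReal) ^ c := by
    rw [← Real.rpow_mul hu, mul_comm, Real.rpow_mul hu]
  have hnorm (s : ι) (i : ℕ) : ‖y s i‖ = y s i := Real.norm_of_nonneg (hy s i)
  have hg (i : ℕ) : ‖∏ s, y s i ^ c‖ ^ p.toReal = ∏ s, (y s i ^ p.toReal) ^ c := by
    rw [Real.norm_of_nonneg (Finset.prod_nonneg fun s _ => Real.rpow_nonneg (hy s i) c),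
      ← Real.finsetProd_rpow _ _ fun s _ => Real.rpow_nonneg (hy s i) c]
    exact Finset.prod_congr rfl fun s _ => hswap (hy s i)
  obtain ⟨hsum, hle⟩ := summable_and_tsum_prod_rpow_le_prod_rpow_tsum
    (f := fun s i => y s i ^ p.toReal) (fun s i => Real.rpow_nonneg (hy s i) _)
    (fun s => by simpa only [hnorm] using (lp.memℓp (y s)).summable hP) hc
  have hmem : Memℓp (fun i => ∏ s, y s i ^ c) p := memℓp_gen (by simpa only [hg] using hsum)
  refine ⟨⟨_, hmem⟩, fun i => rfl, lp.norm_le_of_tsum_le hP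
    (Finset.prod_nonneg fun s _ => Real.rpow_nonneg (norm_nonneg _) c) ?_⟩
  calc ∑' i, ‖∏ s, y s i ^ c‖ ^ p.toReal = ∑' i, ∏ s, (y s i ^ p.toReal) ^ c := tsum_congr hg
    _ ≤ ∏ s, (∑' i, y s i ^ p.toReal) ^ c := hle
    _ = ∏ s, (‖y s‖ ^ p.toReal) ^ c := by simp only [lp.norm_rpow_eq_tsum hP, hnorm]
    _ = (∏ s, ‖y s‖ ^ c) ^ p.toReal := by
      rw [← Real.finsetProd_rpow _ _ fun s _ => Real.rpow_nonneg (norm_nonneg _) c]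
      exact Finset.prod_congr rfl fun s _ => (hswap (norm_nonneg _)).symm

theorem exists_represents_hadProd_hadPow_inv_card (hp : p ≠ ∞) {m : ℕ} (hm : 0 < m)
    {B : Fin m → ℕ → ℕ → ℝ} (hB : 0 ≤ B) {U : Fin m → lpSeq p →L[ℝ] lpSeq p}
    (hU : ∀ s, Represents p (B s) (U s)) :
    ∃ W : lpSeq p →L[ℝ] lpSeq p, Represents p (hadProd fun s => hadPow (B s) (1 / m)) W ∧
      ‖W‖ ≤ ∏ s, ‖U s‖ ^ (1 / (m : ℝ)) := by
  have hm' : (m : ℝ) ≠ 0 := Nat.cast_ne_zero.2 hm.ne'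
  have hcard : 1 ≤ Fintype.card (Fin m) * (1 / (m : ℝ)) := by
    rw [Fintype.card_fin, mul_one_div_cancel hm']
  have hprod {u : ℝ} (hu : 0 ≤ u) : ∏ _s : Fin m, u ^ (1 / (m : ℝ)) = u := by
    rw [Finset.prod_const, Finset.card_univ, Fintype.card_fin, ← Real.rpow_natCast,
      ← Real.rpow_mul hu, one_div_mul_cancel hm', Real.rpow_one]
  refine exists_represents_of_bound (hadProd_nonneg fun s => hadPow_nonneg (hB s) _)
    (Finset.prod_nonneg fun s _ => Real.rpow_nonneg (norm_nonneg _) _) fun x hx => ?_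
  obtain ⟨g, hg, hgx⟩ := exists_lpSeq_prod_rpow_norm_le hp (y := fun s => U s x)
    (fun s i => (hU s).apply_nonneg (hB s) hx i) hcard
  refine ⟨g, ?_, fun i => ?_⟩
  · calc ‖g‖ ≤ ∏ s, ‖U s x‖ ^ (1 / (m : ℝ)) := hgx
      _ ≤ ∏ s, (‖U s‖ * ‖x‖) ^ (1 / (m : ℝ)) := by
        gcongr with s
        exact (U s).le_opNorm x
      _ = (∏ s, ‖U s‖ ^ (1 / (m : ℝ))) * ‖x‖ := by
        simp only [Real.mul_rpow (norm_nonneg _) (norm_nonneg _), Finset.prod_mul_distrib,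
          hprod (norm_nonneg x)]
  · have hentry (j : ℕ) : hadProd (fun s => hadPow (B s) (1 / m)) i j * x j =
        ∏ s, (B s i j * x j) ^ (1 / (m : ℝ)) := by
      conv_lhs => rw [← hprod (hx j)]
      rw [hadProd, ← Finset.prod_mul_distrib]
      exact Finset.prod_congr rfl fun s _ => (Real.mul_rpow (hB s i j) (hx j)).symm
    obtain ⟨hs, hle⟩ := summable_and_tsum_prod_rpow_le_prod_rpow_tsum
      (f := fun s j => B s i j * x j) (fun s j => mul_nonneg (hB s i j) (hx j))
      (fun s => (hU s x i).summable) hcard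
    simp only [hentry, hg i, ← (hU _ x i).tsum_eq]
    exact ⟨hs, hle⟩

theorem exists_represents_hadProd_hadPow (hp : p ≠ ∞) {m : ℕ} {B : Fin m → ℕ → ℕ → ℝ}
    (hB : 0 ≤ B) {U : Fin m → lpSeq p →L[ℝ] lpSeq p} (hU : ∀ s, Represents p (B s) (U s))
    {c : ℝ} (hc : 1 ≤ m * c) :
    ∃ W : lpSeq p →L[ℝ] lpSeq p, Represents p (hadProd fun s => hadPow (B s) c) W ∧
      ‖W‖ ≤ ∏ s, ‖U s‖ ^ c := by
  have hm : 0 < m := Nat.pos_of_ne_zero fun h => by simp [h] at hc; linarith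
  have hm' : (m : ℝ) ≠ 0 := Nat.cast_ne_zero.2 hm.ne'
  have hexp {u : ℝ} (hu : 0 ≤ u) : (u ^ (m * c)) ^ (1 / (m : ℝ)) = u ^ c := by
    rw [← Real.rpow_mul hu]; congr 1; field_simp
  choose V hV hVU using fun s => (hU s).exists_hadPow (hB s) hc
  obtain ⟨W, hW, hWV⟩ := exists_represents_hadProd_hadPow_inv_card hp hm
    (fun s => hadPow_nonneg (hB s) _) hV
  have hBc : (fun s => hadPow (B s) c) = fun s => hadPow (hadPow (B s) (m * c)) (1 / m) :=
    funext fun s => funext fun i => funext fun j => (hexp (hB s i j)).symm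
  refine ⟨W, hBc ▸ hW, hWV.trans ?_⟩
  calc ∏ s, ‖V s‖ ^ (1 / (m : ℝ)) ≤ ∏ s, (‖U s‖ ^ (m * c)) ^ (1 / (m : ℝ)) := by
        gcongr with s
        exact hVU s
    _ = ∏ s, ‖U s‖ ^ c := by simp only [hexp (norm_nonneg _)]

end GeometricMean

/-- for `t ∈ [1,m]` and the cyclic products
`P_i = A_i^{(t)} ⋯ A_m^{(t)} A_1^{(t)} ⋯ A_{i-1}^{(t)}`,
`‖(A₁∘⋯∘A_m)^m‖ ≤ ‖P₁^{(1/t)}∘⋯∘P_m^{(1/t)}‖ ≤ (‖P₁‖⋯‖P_m‖)^{1/t}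
  ≤ (‖(A₁A₂⋯A_m)^{(t)}‖‖(A₂⋯A_mA₁)^{(t)}‖⋯‖(A_mA₁⋯A_{m-1})^{(t)}‖)^{1/t}
  ≤ ‖A₁A₂⋯A_m‖‖A₂⋯A_mA₁‖⋯‖A_mA₁⋯A_{m-1}‖`. -/
theorem norm_hadamard_pow_le_cyclic_chain
    (p : ℝ≥0∞) [Fact (1 ≤ p)] (hp : p ≠ ∞) (m : ℕ) (hm : 0 < m)
    (A : Fin m → ℕ → ℕ → ℝ) (hA : ∀ k i j, 0 ≤ A k i j)
    (T : Fin m → lpSeq p →L[ℝ] lpSeq p) (hT : ∀ k, Represents p (A k) (T k))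
    (t : ℝ) (ht1 : 1 ≤ t) (htm : t ≤ m) :
    ∃ (H Q : lpSeq p →L[ℝ] lpSeq p) (S V : Fin m → lpSeq p →L[ℝ] lpSeq p),
      Represents p (hadProd A) H ∧
      Represents p
        (hadProd fun i => hadPow (cycMatProd (fun k => hadPow (A k) t) i) (1 / t)) Q ∧
      (∀ k, Represents p (hadPow (A k) t) (S k)) ∧
      (∀ i, Represents p (hadPow (cycMatProd A i) t) (V i)) ∧
      ‖H ^ m‖ ≤ ‖Q‖ ∧
      ‖Q‖ ≤ (∏ i, ‖cycOpProd S i‖) ^ (1 / t) ∧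
      (∏ i, ‖cycOpProd S i‖) ^ (1 / t) ≤ (∏ i, ‖V i‖) ^ (1 / t) ∧
      (∏ i, ‖V i‖) ^ (1 / t) ≤ ∏ i, ‖cycOpProd T i‖ := by
  have : NeZero m := ⟨hm.ne'⟩
  have ht0 : 0 < t := by linarith
  have hAt : 0 ≤ fun k => hadPow (A k) t := fun k => hadPow_nonneg (hA k) t
  choose S hS _ using fun k => (hT k).exists_hadPow (hA k) ht1
  have hP := represents_cycMatProd hAt hS
  choose V hV hVT using fun i =>
    (represents_cycMatProd hA hT i).exists_hadPow (cycMatProd_nonneg hA i) ht1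
  obtain ⟨H, hH, -⟩ := exists_represents_hadProd_hadPow hp hA hT (c := 1)
    (by rw [mul_one]; exact_mod_cast hm)
  simp only [hadPow_one] at hH
  obtain ⟨Q, hQ, hQP⟩ := exists_represents_hadProd_hadPow hp (cycMatProd_nonneg hAt) hP
    (c := 1 / t) (by rw [mul_one_div]; exact (one_le_div ht0).2 htm)
  refine ⟨H, Q, S, V, hH, hQ, hS, hV, ?_, ?_, ?_, ?_⟩
  · exact (hH.matListProd_replicate (hadProd_nonneg hA) m).opNorm_le_of_le hQ
      (matListProd_replicate_nonneg (hadProd_nonneg hA) m)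
      (matListProd_replicate_hadProd_le_cycMatProd hA hS ht0 htm)
  · rwa [← Real.finsetProd_rpow _ _ fun i _ => norm_nonneg _]
  · gcongr with i
    exact (hP i).opNorm_le_of_le (hV i) (cycMatProd_nonneg hAt i)
      (cycMatProd_hadPow_le hA hT ht1 i)
  · calc (∏ i, ‖V i‖) ^ (1 / t) ≤ (∏ i, ‖cycOpProd T i‖ ^ t) ^ (1 / t) := by
          gcongr with i
          exact hVT i
      _ = ∏ i, ‖cycOpProd T i‖ := by
          rw [Real.finsetProd_rpow _ _ fun i _ => norm_nonneg _, one_div,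
            Real.rpow_rpow_inv (Finset.prod_nonneg fun i _ => norm_nonneg _) ht0.ne']
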